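/- Let p ≥ 0. Suppose H_0,…,H_{p-1} are nowhere zero, H_p is identically zero, b is nowhere zero, and θ ∈ 𝔊 satisfies T_i(θ) = θ/b. Then the operator identity (T_i − 1)∘(T_j^p(θ)·)∘B_p = ((T_j^p(θ)/T_j^p(b))·)∘B̄_p∘L holds on 𝔊. In particular, if θ is nowhere zero, then 𝒥 = T_j^p(θ)·B_p maps every symmetry (element of ker L) into ker(T_i − 1); i.e. 𝒥 is a formal j-integral. -/
import Mathlib


/-!
Discrete (quad-graph) setting: the space `𝔊` is modelled by `QG = ℤ → ℤ → ℝ`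
(functions `φ(i,j)`), with the shifts `Ti`, `Tj`, their inverses, and the
`k`-fold shifts `TiZ k`, `TjZ k`.  For `g : QG`, pointwise multiplication
`g * φ` models the operator `g·`.
-/

/-- The function space `𝔊` of functions `ℤ² → ℝ`. -/
abbrev QG : Type := ℤ → ℤ → ℝ

namespace QG

noncomputable section

/-- The shift operator `T_i(φ)(i,j) = φ(i+1,j)`. -/
def Ti (φ : QG) : QG := fun i j => φ (i + 1) j

/-- The shift operator `T_j(φ)(i,j) = φ(i,j+1)`. -/
def Tj (φ : QG) : QG := fun i j => φ i (j + 1)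

/-- The `k`-fold shift in `i`. -/
def TiZ (k : ℤ) (φ : QG) : QG := fun i j => φ (i + k) j

/-- The `k`-fold shift in `j`. -/
def TjZ (k : ℤ) (φ : QG) : QG := fun i j => φ i (j + k)

/-- The inverse shift `T_i⁻¹`. -/
def TiInv (φ : QG) : QG := fun i j => φ (i - 1) j

/-- The inverse shift `T_j⁻¹`. -/
def TjInv (φ : QG) : QG := fun i j => φ i (j - 1)

/-- A function that is nowhere zero. -/
def NowhereZero (φ : QG) : Prop := ∀ i j, φ i j ≠ 0

/-- The linearization operator `L = T_i∘T_j − a·T_i − b·T_j − c·`. -/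
def L (a b c : QG) (φ : QG) : QG := Ti (Tj φ) - a * Ti φ - b * Tj φ - c * φ

/-- The pair `(b_k, H_k)` of the Laplace j-transformations:
`b_0 = a`, `H_0 = c + b·T_i⁻¹(a)`,
`b_{k+1} = T_i⁻¹(b_k)·T_j(H_k)/H_k`,
`H_{k+1} = T_j(H_k) − T_j^k(b)·b_{k+1} + T_j^{k+1}(b)·T_i⁻¹(b_{k+1})`. -/
def bH (a b c : QG) : ℕ → QG × QG
  | 0 => (a, c + b * TiInv a)
  | k + 1 =>
      let bk := TiInv (bH a b c k).1 * Tj (bH a b c k).2 / (bH a b c k).2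
      (bk, Tj (bH a b c k).2 - TjZ (k : ℤ) b * bk + TjZ ((k : ℤ) + 1) b * TiInv bk)

/-- The function `b_k`. -/
def bj (a b c : QG) (k : ℕ) : QG := (bH a b c k).1

/-- The Laplace j-invariant `H_k`. -/
def Hj (a b c : QG) (k : ℕ) : QG := (bH a b c k).2

/-- The operator `L_k`: `L_0 = L` and
`L_k = (T_i − T_j^k(b)·)∘(T_j − T_i⁻¹(b_k)·) − H_k·` for `k ≥ 1`. -/
def Lk (a b c : QG) : ℕ → QG → QG
  | 0, φ => L a b c φ
  | k + 1, φ =>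
      Ti (Tj φ - TiInv (bj a b c (k + 1)) * φ)
        - TjZ ((k : ℤ) + 1) b * (Tj φ - TiInv (bj a b c (k + 1)) * φ)
        - Hj a b c (k + 1) * φ

/-- `Bo (k+1)` is the operator `B_k = (T_j − T_i⁻¹(b_k)·)∘B_{k-1}`; `Bo 0 = id` is `B_{-1}`. -/
def Bo (a b c : QG) : ℕ → QG → QG
  | 0, φ => φ
  | k + 1, φ => Tj (Bo a b c k φ) - TiInv (bj a b c k) * Bo a b c k φ

/-- `Bbar k` is the operator `B̄_k`: `B̄_0 = id`, `B̄_k = (T_j − b_k·)∘B̄_{k-1}`. -/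
def Bbar (a b c : QG) : ℕ → QG → QG
  | 0, φ => φ
  | k + 1, φ => Tj (Bbar a b c k φ) - bj a b c (k + 1) * Bbar a b c k φ

/-- `Rchain p` is the composition
`((1/H_0)·)∘(T_i − b·)∘((1/H_1)·)∘(T_i − T_j(b)·)∘···∘((1/H_{p-1})·)∘(T_i − T_j^{p-1}(b)·)`
(the identity for `p = 0`). -/
def Rchain (a b c : QG) : ℕ → QG → QG
  | 0, φ => φ
  | k + 1, φ => Rchain a b c k ((1 / Hj a b c k) * (Ti φ - TjZ (k : ℤ) b * φ))

end

lemma bj_succ (a b c : QG) (k : ℕ) :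
    bj a b c (k + 1) = TiInv (bj a b c k) * Tj (Hj a b c k) / Hj a b c k := rfl

lemma Hj_succ (a b c : QG) (k : ℕ) :
    Hj a b c (k + 1) = Tj (Hj a b c k) - TjZ (k : ℤ) b * bj a b c (k + 1)
      + TjZ ((k : ℤ) + 1) b * TiInv (bj a b c (k + 1)) := rfl

lemma Bbar_zero (a b c : QG) : ∀ k, Bbar a b c k 0 = 0 := by
  intro k
  induction k with
  | zero => rfl
  | succ k ih =>
      show Tj (Bbar a b c k 0) - bj a b c (k + 1) * Bbar a b c k 0 = 0
      rw [ih]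
      funext i j
      simp [Tj]

/-- Key inductive identity:
`T_i ∘ B_k = T_j^k(b)·B_k + B̄_k ∘ L + H_k·B_{k-1}` (with `B_k = Bo (k+1)`). -/
lemma key_identity (a b c : QG) (φ : QG) : ∀ k : ℕ,
    (∀ m, m < k → NowhereZero (Hj a b c m)) → ∀ i j : ℤ,
    Ti (Bo a b c (k + 1) φ) i j
      = TjZ (k : ℤ) b i j * Bo a b c (k + 1) φ i j
        + Bbar a b c k (L a b c φ) i j
        + Hj a b c k i j * Bo a b c k φ i j := by
  intro k
  induction k with
  | zero =>
      intro _ i j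
      show (Tj (Bo a b c 0 φ) - TiInv (bj a b c 0) * Bo a b c 0 φ) (i + 1) j = _
      simp only [Bo, Bbar, L, bj, Hj, bH, Ti, Tj, TiInv, TjZ, Pi.add_apply, Pi.mul_apply,
        Pi.sub_apply, Nat.cast_zero, add_zero, Int.add_sub_cancel]
      ring
  | succ k ih =>
      intro hH i j
      have ih' := ih (fun m hm => hH m (Nat.lt_succ_of_lt hm))
      have hk0 : Hj a b c k i j ≠ 0 := hH k (Nat.lt_succ_self k) i j
      -- abbreviations
      set ψ : QG := Bo a b c (k + 1) φ with hψ
      set χ : QG := Bo a b c k φ with hχ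
      set F : QG := Bbar a b c k (L a b c φ) with hF
      -- pointwise instances of the induction hypothesis
      have h1 : ψ (i + 1) j
          = b i (j + (k : ℤ)) * ψ i j + F i j + Hj a b c k i j * χ i j := by
        have := ih' i j
        simpa only [Ti, TjZ] using this
      have h2 : ψ (i + 1) (j + 1)
          = b i (j + 1 + (k : ℤ)) * ψ i (j + 1) + F i (j + 1)
            + Hj a b c k i (j + 1) * χ i (j + 1) := by
        have := ih' i (j + 1)
        simpa only [Ti, TjZ] using this
      -- definition of ψ at (i,j)
      have hdef : ψ i j = χ i (j + 1) - bj a b c k (i - 1) j * χ i j := by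
        rw [hψ]
        show (Tj (Bo a b c k φ) - TiInv (bj a b c k) * Bo a b c k φ) i j = _
        simp only [Tj, TiInv, Pi.sub_apply, Pi.mul_apply, ← hχ]
      -- the division cancellation
      have hb1 : bj a b c (k + 1) i j * Hj a b c k i j
          = bj a b c k (i - 1) j * Hj a b c k i (j + 1) := by
        rw [bj_succ]
        simp only [Pi.div_apply, Pi.mul_apply, TiInv, Tj]
        field_simp
      have hb1' : bj a b c (k + 1) (i - 1) j * Hj a b c k (i - 1) j
          = bj a b c k (i - 1 - 1) j * Hj a b c k (i - 1) (j + 1) := by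
        rw [bj_succ]
        simp only [Pi.div_apply, Pi.mul_apply, TiInv, Tj]
        have : Hj a b c k (i - 1) j ≠ 0 := hH k (Nat.lt_succ_self k) (i - 1) j
        field_simp
      -- unfold the goal
      show (Tj ψ - TiInv (bj a b c (k + 1)) * ψ) (i + 1) j
          = TjZ ((k + 1 : ℕ) : ℤ) b i j * (Tj ψ - TiInv (bj a b c (k + 1)) * ψ) i j
            + (Tj F - bj a b c (k + 1) * F) i j
            + Hj a b c (k + 1) i j * ψ i j
      rw [Hj_succ]
      simp only [Tj, TiInv, TjZ, Pi.sub_apply, Pi.mul_apply, Pi.add_apply,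
        Int.add_sub_cancel, Nat.cast_add, Nat.cast_one]
      have hidx : j + 1 + (k : ℤ) = j + ((k : ℤ) + 1) := by ring
      rw [hidx] at h2
      rw [h1, h2, hdef]
      linear_combination (-(χ i j)) * hb1

/-- Let `p ≥ 0`.  If `H_0, …, H_{p-1}` are nowhere zero, `H_p ≡ 0`,
`b` is nowhere zero and `T_i(θ) = θ/b`, then
`(T_i − 1)∘(T_j^p(θ)·)∘B_p = ((T_j^p(θ)/T_j^p(b))·)∘B̄_p∘L` on `𝔊`; in particular,
if `θ` is nowhere zero, then `𝒥 = T_j^p(θ)·B_p` maps `ker L` into `ker (T_i − 1)`,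
i.e. `𝒥` is a formal j-integral. (Here `B_p = Bo (p+1)` and `B̄_p = Bbar p`.) -/
theorem statement15 (a b c θ : QG) (p : ℕ)
    (hH : ∀ m, m < p → NowhereZero (Hj a b c m)) (hHp : Hj a b c p = 0)
    (hb : NowhereZero b) (hθ : Ti θ = θ / b) :
    (∀ φ : QG,
        Ti (TjZ (p : ℤ) θ * Bo a b c (p + 1) φ) - TjZ (p : ℤ) θ * Bo a b c (p + 1) φ
          = (TjZ (p : ℤ) θ / TjZ (p : ℤ) b) * Bbar a b c p (L a b c φ)) ∧
    (NowhereZero θ → ∀ φ : QG, L a b c φ = 0 →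
        Ti (TjZ (p : ℤ) θ * Bo a b c (p + 1) φ) = TjZ (p : ℤ) θ * Bo a b c (p + 1) φ) := by
  have main : ∀ φ : QG,
      Ti (TjZ (p : ℤ) θ * Bo a b c (p + 1) φ) - TjZ (p : ℤ) θ * Bo a b c (p + 1) φ
        = (TjZ (p : ℤ) θ / TjZ (p : ℤ) b) * Bbar a b c p (L a b c φ) := by
    intro φ
    funext i j
    have hk := key_identity a b c φ p hH i j
    rw [hHp] at hk
    simp only [Pi.zero_apply, zero_mul, add_zero] at hk
    have hθ' : θ (i + 1) (j + (p : ℤ)) = θ i (j + (p : ℤ)) / b i (j + (p : ℤ)) := by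
      have := congrFun (congrFun hθ i) (j + (p : ℤ))
      simpa only [Ti, Pi.div_apply] using this
    have hbnz : b i (j + (p : ℤ)) ≠ 0 := hb i (j + (p : ℤ))
    simp only [Ti, TjZ, Pi.sub_apply, Pi.mul_apply, Pi.div_apply] at hk ⊢
    rw [hk, hθ']
    field_simp
    ring
  refine ⟨main, fun _ φ hLφ => ?_⟩
  have h := main φ
  rw [hLφ, Bbar_zero, mul_zero, sub_eq_zero] at h
  exact h

end QG
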